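/- Let Ω ⊂ ℝ^n be a bounded open set, T > 0, q > 0, h ∈ (0,1], and let u, v ∈ L^{q+1}(Ω × (−h, T+h), ℝ^N). Then the finite integration by parts formula ∬_{Ω×(0,T)} Δ_{−h}(⟦u⟧^q) · (v − u) dx dt ≤ ∬_{Ω×(0,T)} Δ_h v · (⟦v⟧^q − ⟦u⟧^q) dx dt − (1/h) ∬_{Ω×(T−h,T)} 𝔟[u(t), v(t+h)] dx dt + (1/h) ∬_{Ω×(−h,0)} 𝔟[u(t), v(t)] dx dt + δ_1(h) + δ_2(h) holds, where δ_1(h) := (1/h) ∬_{Ω×(0,T)} 𝔟[v(t), v(t+h)] dx dt and δ_2(h) := ∬_{Ω×(−h,0)} Δ_h v · (⟦v⟧^q(t+h) − ⟦u⟧^q(t)) dx dt. -/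

import Mathlib

/-!
`bdry q` is the Bregman divergence of `‖·‖^(q+1)/(q+1)`, whose gradient is `vpow q`; it is
nonnegative by Young's inequality and satisfies the three-point identity
`⟪⟦a⟧^q - ⟦c⟧^q, b - a⟫ = 𝔟[c,b] - 𝔟[a,b] - 𝔟[c,a]`. Applied pointwise, this identity turns the
three inner-product integrals into integrals of boundary terms. After the shift `t ↦ t - h`, the
integrals of `𝔟[u(t), v(t+h)]` over `(-h,T-h)`, `(-h,0)`, `(0,T)` and `(T-h,T)` cancel, and the
right-hand side minus the left-hand side is exactly
`(1/h) (∬_{(0,T)} 𝔟[u(t-h), u(t)] + ∬_{(-h,0)} 𝔟[v(t+h), v(t)]) ≥ 0`.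
The `L^{q+1}` hypotheses make all boundary terms integrable, since
`0 ≤ 𝔟[a,b] ≲ |a|^{q+1} + |b|^{q+1}`.
-/

open Real MeasureTheory RealInnerProductSpace

/-- The power `⟦w⟧^α := |w|^{α−1} w` (with `⟦0⟧^α = 0`). -/
noncomputable def vpow {N : ℕ} (α : ℝ) (w : EuclideanSpace ℝ (Fin N)) :
    EuclideanSpace ℝ (Fin N) :=
  ‖w‖ ^ (α - 1) • w

/-- The boundary term `𝔟[u,v] := (1/(q+1))|v|^{q+1} − (1/(q+1))|u|^{q+1} − ⟦u⟧^q · (v − u)`. -/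
noncomputable def bdry {N : ℕ} (q : ℝ) (u v : EuclideanSpace ℝ (Fin N)) : ℝ :=
  (1 / (q + 1)) * ‖v‖ ^ (q + 1) - (1 / (q + 1)) * ‖u‖ ^ (q + 1) - ⟪vpow q u, v - u⟫

section Pointwise

variable {N : ℕ} {q : ℝ}

lemma norm_vpow (hq : 0 < q) (a : EuclideanSpace ℝ (Fin N)) : ‖vpow q a‖ = ‖a‖ ^ q := by
  rcases eq_or_ne a 0 with rfl | ha
  · simp [vpow, zero_rpow hq.ne']
  · rw [vpow, norm_smul, norm_of_nonneg (by positivity), ← rpow_add_one (norm_ne_zero_iff.2 ha),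
      sub_add_cancel]

lemma inner_vpow_self (hq : 0 < q) (a : EuclideanSpace ℝ (Fin N)) :
    ⟪vpow q a, a⟫ = ‖a‖ ^ (q + 1) := by
  rcases eq_or_ne a 0 with rfl | ha
  · simp [vpow, zero_rpow (by positivity : q + 1 ≠ 0)]
  · rw [vpow, real_inner_smul_left, real_inner_self_eq_norm_sq, ← rpow_two,
      ← rpow_add (norm_pos_iff.2 ha)]
    congr 1
    ring

lemma bdry_eq_add_sub_inner (hq : 0 < q) (a b : EuclideanSpace ℝ (Fin N)) :
    bdry q a b = 1 / (q + 1) * ‖b‖ ^ (q + 1) + q / (q + 1) * ‖a‖ ^ (q + 1) - ⟪vpow q a, b⟫ := by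
  have hq1 : q + 1 ≠ 0 := by positivity
  rw [bdry, inner_sub_right, inner_vpow_self hq]
  field_simp
  ring

lemma abs_inner_vpow_le (hq : 0 < q) (a b : EuclideanSpace ℝ (Fin N)) :
    |⟪vpow q a, b⟫| ≤ q / (q + 1) * ‖a‖ ^ (q + 1) + 1 / (q + 1) * ‖b‖ ^ (q + 1) := by
  have hq1 : 0 < q + 1 := by positivity
  calc |⟪vpow q a, b⟫| ≤ ‖a‖ ^ q * ‖b‖ := by
        simpa only [norm_vpow hq] using abs_real_inner_le_norm (vpow q a) b
    _ = (‖a‖ ^ (q + 1)) ^ (q / (q + 1)) * (‖b‖ ^ (q + 1)) ^ (1 / (q + 1)) := by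
        rw [← rpow_mul (norm_nonneg a), ← rpow_mul (norm_nonneg b)]
        field_simp
        simp
    _ ≤ _ := geom_mean_le_arith_mean2_weighted (by positivity) (by positivity) (by positivity)
        (by positivity) (by field_simp)

lemma bdry_nonneg (hq : 0 < q) (a b : EuclideanSpace ℝ (Fin N)) : 0 ≤ bdry q a b := by
  rw [bdry_eq_add_sub_inner hq]
  linarith [le_abs_self ⟪vpow q a, b⟫, abs_inner_vpow_le hq a b]

lemma bdry_le (hq : 0 < q) (a b : EuclideanSpace ℝ (Fin N)) :
    bdry q a b ≤ 2 * (q / (q + 1) * ‖a‖ ^ (q + 1) + 1 / (q + 1) * ‖b‖ ^ (q + 1)) := by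
  rw [bdry_eq_add_sub_inner hq]
  linarith [neg_abs_le ⟪vpow q a, b⟫, abs_inner_vpow_le hq a b]

lemma bdry_three_point (a b c : EuclideanSpace ℝ (Fin N)) :
    ⟪vpow q a - vpow q c, b - a⟫ = bdry q c b - bdry q a b - bdry q c a := by
  simp only [bdry, inner_sub_left, inner_sub_right]
  ring

lemma real_inner_smul_sub_vpow_comm (r : ℝ) (a b c : EuclideanSpace ℝ (Fin N)) :
    ⟪r • (b - a), vpow q a - vpow q c⟫ = ⟪r • (vpow q a - vpow q c), b - a⟫ := by
  rw [real_inner_smul_left, real_inner_smul_left, real_inner_comm]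

lemma real_inner_smul_sub_vpow_neg (r : ℝ) (a b c : EuclideanSpace ℝ (Fin N)) :
    ⟪r • (a - b), vpow q a - vpow q c⟫ = ⟪(-r) • (vpow q a - vpow q c), b - a⟫ := by
  rw [real_inner_smul_left, real_inner_smul_left, real_inner_comm, ← neg_sub a b, inner_neg_right]
  ring

lemma measurable_bdry :
    Measurable fun p : EuclideanSpace ℝ (Fin N) × EuclideanSpace ℝ (Fin N) => bdry q p.1 p.2 := by
  unfold bdry vpow
  fun_prop

end Pointwise

section Integrability

variable {N : ℕ} {q : ℝ}

lemma MeasureTheory.MemLp.integrable_bdry {α : Type*} [MeasurableSpace α] {μ : Measure α}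
    (hq : 0 < q) {f g : α → EuclideanSpace ℝ (Fin N)}
    (hf : MemLp f (ENNReal.ofReal (q + 1)) μ) (hg : MemLp g (ENNReal.ofReal (q + 1)) μ) :
    Integrable (fun z => bdry q (f z) (g z)) μ := by
  have hp : ENNReal.ofReal (q + 1) ≠ 0 := (ENNReal.ofReal_pos.2 (by linarith)).ne'
  have hnorm : ∀ {k : α → EuclideanSpace ℝ (Fin N)}, MemLp k (ENNReal.ofReal (q + 1)) μ →
      Integrable (fun z => ‖k z‖ ^ (q + 1)) μ := fun hk => by
    simpa [ENNReal.toReal_ofReal (by linarith : 0 ≤ q + 1)] using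
      hk.integrable_norm_rpow hp ENNReal.ofReal_ne_top
  refine Integrable.mono' ((((hnorm hf).const_mul (q / (q + 1))).add
    ((hnorm hg).const_mul (1 / (q + 1)))).const_mul 2) ?_ (ae_of_all _ fun z => ?_)
  · exact (measurable_bdry.comp_aemeasurable
      (hf.aemeasurable.prodMk hg.aemeasurable)).aestronglyMeasurable
  · rw [norm_of_nonneg (bdry_nonneg hq _ _)]
    exact bdry_le hq _ _

variable {X Y : Type*} [MeasurableSpace X] [MeasurableSpace Y] {μ : Measure X} {ν : Measure Y}
  [SFinite μ] [SFinite ν]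

lemma integral_integral_inner_smul_vpow_sub (hq : 0 < q)
    {a b c : X → Y → EuclideanSpace ℝ (Fin N)} (r : ℝ)
    (ha : MemLp (fun z : X × Y => a z.1 z.2) (ENNReal.ofReal (q + 1)) (μ.prod ν))
    (hb : MemLp (fun z : X × Y => b z.1 z.2) (ENNReal.ofReal (q + 1)) (μ.prod ν))
    (hc : MemLp (fun z : X × Y => c z.1 z.2) (ENNReal.ofReal (q + 1)) (μ.prod ν)) :
    ∫ t, ∫ x, ⟪r • (vpow q (a x t) - vpow q (c x t)), b x t - a x t⟫ ∂μ ∂ν =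
      r * ((∫ t, ∫ x, bdry q (c x t) (b x t) ∂μ ∂ν) - (∫ t, ∫ x, bdry q (a x t) (b x t) ∂μ ∂ν)
        - ∫ t, ∫ x, bdry q (c x t) (a x t) ∂μ ∂ν) := by
  have hcb := hc.integrable_bdry hq hb
  have hab := ha.integrable_bdry hq hb
  have hca := hc.integrable_bdry hq ha
  calc ∫ t, ∫ x, ⟪r • (vpow q (a x t) - vpow q (c x t)), b x t - a x t⟫ ∂μ ∂ν
      = ∫ t, ∫ x, r * (bdry q (c x t) (b x t) - bdry q (a x t) (b x t)
          - bdry q (c x t) (a x t)) ∂μ ∂ν := by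
        simp only [real_inner_smul_left, bdry_three_point]
    _ = ∫ z, r * (bdry q (c z.1 z.2) (b z.1 z.2) - bdry q (a z.1 z.2) (b z.1 z.2)
          - bdry q (c z.1 z.2) (a z.1 z.2)) ∂(μ.prod ν) :=
        (integral_prod_symm _ (((hcb.sub hab).sub hca).const_mul r)).symm
    _ = _ := by
        rw [integral_const_mul, integral_sub ?_ hca, integral_sub hcb hab,
          integral_prod_symm _ hcb, integral_prod_symm _ hab, integral_prod_symm _ hca]
        exact hcb.sub hab

end Integrability

section TimeWindows

variable {X : Type*} [MeasurableSpace X] {μ : Measure X} {E : Type*} [NormedAddCommGroup E]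
  {p : ENNReal}

lemma MeasureTheory.MemLp.restrict_time_Ioo {f : X × ℝ → E} {a b c d : ℝ}
    (hf : MemLp f p (μ.prod (volume.restrict (Set.Ioo a b)))) (hac : a ≤ c) (hdb : d ≤ b) :
    MemLp f p (μ.prod (volume.restrict (Set.Ioo c d))) :=
  hf.mono_measure <|
    Measure.prod_mono le_rfl (Measure.restrict_mono (Set.Ioo_subset_Ioo hac hdb) le_rfl)

lemma MeasureTheory.MemLp.comp_time_add [SFinite μ] {f : X × ℝ → E} {a b : ℝ}
    (hf : MemLp f p (μ.prod (volume.restrict (Set.Ioo a b)))) (s : ℝ) :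
    MemLp (fun z : X × ℝ => f (z.1, z.2 + s)) p
      (μ.prod (volume.restrict (Set.Ioo (a - s) (b - s)))) := by
  have hshift := (measurePreserving_add_right volume s).restrict_preimage
    (measurableSet_Ioo (a := a) (b := b))
  rw [Set.preimage_add_const_Ioo] at hshift
  exact hf.comp_measurePreserving ((MeasurePreserving.id μ).prod hshift)

end TimeWindows

lemma setIntegral_Ioo_add_setIntegral_Ioo {G : ℝ → ℝ} {a b c : ℝ} (hab : a ≤ b) (hbc : b ≤ c)
    (hG : IntegrableOn G (Set.Ioo a c)) :
    (∫ t in Set.Ioo a b, G t) + ∫ t in Set.Ioo b c, G t = ∫ t in Set.Ioo a c, G t := by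
  have hG' : IntegrableOn G (Set.Ioc a c) := hG.congr_set_ae Ioo_ae_eq_Ioc.symm
  simp only [← integral_Ioc_eq_integral_Ioo, ← intervalIntegral.integral_of_le hab,
    ← intervalIntegral.integral_of_le hbc, ← intervalIntegral.integral_of_le (hab.trans hbc)]
  exact intervalIntegral.integral_add_adjacent_intervals
    ((intervalIntegrable_iff_integrableOn_Ioc_of_le hab).2
      (hG'.mono_set (Set.Ioc_subset_Ioc_right hbc)))
    ((intervalIntegrable_iff_integrableOn_Ioc_of_le hbc).2
      (hG'.mono_set (Set.Ioc_subset_Ioc_left hab)))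

lemma setIntegral_Ioo_comp_sub_right (G : ℝ → ℝ) (a b s : ℝ) :
    ∫ t in Set.Ioo a b, G (t - s) = ∫ t in Set.Ioo (a - s) (b - s), G t := by
  have := (measurePreserving_sub_right volume s).setIntegral_preimage_emb
    (measurableEmbedding_subRight s) G (Set.Ioo (a - s) (b - s))
  simpa using this

lemma setIntegral_Ioo_comp_sub_eq {G : ℝ → ℝ} {a b s : ℝ} (hs : 0 ≤ s) (hab : a ≤ b)
    (hG : IntegrableOn G (Set.Ioo (a - s) b)) :
    ∫ t in Set.Ioo a b, G (t - s) = (∫ t in Set.Ioo (a - s) a, G t) + (∫ t in Set.Ioo a b, G t)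
      - ∫ t in Set.Ioo (b - s) b, G t := by
  rw [setIntegral_Ioo_comp_sub_right]
  linarith [setIntegral_Ioo_add_setIntegral_Ioo (by linarith) hab hG,
    setIntegral_Ioo_add_setIntegral_Ioo (b := b - s) (by linarith) (by linarith) hG]

theorem finite_integration_by_parts_general (n N : ℕ)
    (Ω : Set (EuclideanSpace ℝ (Fin n))) (T : ℝ) (hT : 0 < T)
    (q : ℝ) (hq : 0 < q) (h : ℝ) (hh : h ∈ Set.Ioc (0 : ℝ) 1)
    (u v : EuclideanSpace ℝ (Fin n) → ℝ → EuclideanSpace ℝ (Fin N))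
    (hu : MemLp (fun z : EuclideanSpace ℝ (Fin n) × ℝ => u z.1 z.2)
      (ENNReal.ofReal (q + 1))
      ((volume.restrict Ω).prod (volume.restrict (Set.Ioo (-h) (T + h)))))
    (hv : MemLp (fun z : EuclideanSpace ℝ (Fin n) × ℝ => v z.1 z.2)
      (ENNReal.ofReal (q + 1))
      ((volume.restrict Ω).prod (volume.restrict (Set.Ioo (-h) (T + h))))) :
    (∫ t in Set.Ioo (0 : ℝ) T, ∫ x in Ω,
        ⟪(1 / h) • (vpow q (u x t) - vpow q (u x (t - h))), v x t - u x t⟫) ≤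
      (∫ t in Set.Ioo (0 : ℝ) T, ∫ x in Ω,
        ⟪(1 / h) • (v x (t + h) - v x t), vpow q (v x t) - vpow q (u x t)⟫)
      - (1 / h) * (∫ t in Set.Ioo (T - h) T, ∫ x in Ω, bdry q (u x t) (v x (t + h)))
      + (1 / h) * (∫ t in Set.Ioo (-h) (0 : ℝ), ∫ x in Ω, bdry q (u x t) (v x t))
      + (1 / h) * (∫ t in Set.Ioo (0 : ℝ) T, ∫ x in Ω, bdry q (v x t) (v x (t + h)))
      + (∫ t in Set.Ioo (-h) (0 : ℝ), ∫ x in Ω,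
          ⟪(1 / h) • (v x (t + h) - v x t), vpow q (v x (t + h)) - vpow q (u x t)⟫) := by
  obtain ⟨hh, -⟩ := hh
  have hv_fwd : MemLp (fun z => v z.1 (z.2 + h)) (ENNReal.ofReal (q + 1))
      ((volume.restrict Ω).prod (volume.restrict (Set.Ioo (-h) T))) :=
    (hv.comp_time_add h).restrict_time_Ioo (by linarith) (by linarith)
  have hu_bwd : MemLp (fun z => u z.1 (z.2 - h)) (ENNReal.ofReal (q + 1))
      ((volume.restrict Ω).prod (volume.restrict (Set.Ioo 0 T))) := by
    simpa only [← sub_eq_add_neg] using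
      (hu.comp_time_add (-h)).restrict_time_Ioo (by linarith) (by linarith)
  simp only [real_inner_smul_sub_vpow_comm, real_inner_smul_sub_vpow_neg]
  rw [integral_integral_inner_smul_vpow_sub (c := fun x t => u x (t - h)) hq _
      (hu.restrict_time_Ioo (by linarith) (by linarith))
      (hv.restrict_time_Ioo (by linarith) (by linarith)) hu_bwd,
    integral_integral_inner_smul_vpow_sub (b := fun x t => v x (t + h)) hq _
      (hv.restrict_time_Ioo (by linarith) (by linarith))
      (hv_fwd.restrict_time_Ioo (by linarith) le_rfl)
      (hu.restrict_time_Ioo (by linarith) (by linarith)),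
    integral_integral_inner_smul_vpow_sub (a := fun x t => v x (t + h)) hq _
      (hv_fwd.restrict_time_Ioo le_rfl (by linarith)) (hv.restrict_time_Ioo le_rfl (by linarith))
      (hu.restrict_time_Ioo le_rfl (by linarith))]
  have hB : IntegrableOn (fun t => ∫ x in Ω, bdry q (u x t) (v x (t + h))) (Set.Ioo (-h) T) :=
    ((hu.restrict_time_Ioo le_rfl (by linarith)).integrable_bdry hq hv_fwd).integral_prod_right
  have hshift := setIntegral_Ioo_comp_sub_eq (a := 0) hh.le hT.le (by rwa [zero_sub])
  simp only [sub_add_cancel, zero_sub] at hshift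
  have hC : 0 ≤ ∫ t in Set.Ioo 0 T, ∫ x in Ω, bdry q (u x (t - h)) (u x t) :=
    integral_nonneg fun t => integral_nonneg fun x => bdry_nonneg hq _ _
  have hD : 0 ≤ ∫ t in Set.Ioo (-h) 0, ∫ x in Ω, bdry q (v x (t + h)) (v x t) :=
    integral_nonneg fun t => integral_nonneg fun x => bdry_nonneg hq _ _
  rw [hshift]
  have hgap := mul_nonneg (one_div_pos.2 hh).le (add_nonneg hC hD)
  linarith

/-- Finite integration by parts formula: for `h ∈ (0,1]` and
`u, v ∈ L^{q+1}(Ω × (−h,T+h), ℝ^N)`,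
`∬_{Ω_T} Δ_{−h}(⟦u⟧^q) · (v − u) ≤ ∬_{Ω_T} Δ_h v · (⟦v⟧^q − ⟦u⟧^q)
  − (1/h) ∬_{Ω×(T−h,T)} 𝔟[u(t),v(t+h)] + (1/h) ∬_{Ω×(−h,0)} 𝔟[u(t),v(t)]
  + δ₁(h) + δ₂(h)`. -/
theorem finite_integration_by_parts (n N : ℕ)
    (Ω : Set (EuclideanSpace ℝ (Fin n))) (hΩo : IsOpen Ω)
    (hΩb : Bornology.IsBounded Ω) (T : ℝ) (hT : 0 < T)
    (q : ℝ) (hq : 0 < q) (h : ℝ) (hh : h ∈ Set.Ioc (0 : ℝ) 1)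
    (u v : EuclideanSpace ℝ (Fin n) → ℝ → EuclideanSpace ℝ (Fin N))
    (hu : MemLp (fun z : EuclideanSpace ℝ (Fin n) × ℝ => u z.1 z.2)
      (ENNReal.ofReal (q + 1))
      ((volume.restrict Ω).prod (volume.restrict (Set.Ioo (-h) (T + h)))))
    (hv : MemLp (fun z : EuclideanSpace ℝ (Fin n) × ℝ => v z.1 z.2)
      (ENNReal.ofReal (q + 1))
      ((volume.restrict Ω).prod (volume.restrict (Set.Ioo (-h) (T + h))))) :
    (∫ t in Set.Ioo (0 : ℝ) T, ∫ x in Ω,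
        ⟪(1 / h) • (vpow q (u x t) - vpow q (u x (t - h))), v x t - u x t⟫) ≤
      (∫ t in Set.Ioo (0 : ℝ) T, ∫ x in Ω,
        ⟪(1 / h) • (v x (t + h) - v x t), vpow q (v x t) - vpow q (u x t)⟫)
      - (1 / h) * (∫ t in Set.Ioo (T - h) T, ∫ x in Ω, bdry q (u x t) (v x (t + h)))
      + (1 / h) * (∫ t in Set.Ioo (-h) (0 : ℝ), ∫ x in Ω, bdry q (u x t) (v x t))
      + (1 / h) * (∫ t in Set.Ioo (0 : ℝ) T, ∫ x in Ω, bdry q (v x t) (v x (t + h)))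
      + (∫ t in Set.Ioo (-h) (0 : ℝ), ∫ x in Ω,
          ⟪(1 / h) • (v x (t + h) - v x t), vpow q (v x (t + h)) - vpow q (u x t)⟫) :=
  finite_integration_by_parts_general n N Ω T hT q hq h hh u v hu hv
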